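/- Let M be a metric space with base point 0, let ε > 0, and let (m_{u_iv_i})_{i∈ℕ} be a sequence of molecules in F(M) for which there exists a sequence (A_i)_{i∈ℕ} of pairwise disjoint subsets of M such that u_i ∈ A_i and d(u_i,x) + d(v_i,y) ≥ (1 − ε)(d(u_i,v_i) + d(x,y)) for all i ∈ ℕ and all x, y ∈ M \ A_i. Then, viewing each m_{u_iv_i} as an element of Lip_0(M)*, one has limsup_{i→∞} ‖F + m_{u_iv_i}‖ ≥ 2 − 2ε for every F in the unit sphere of the dual space Lip_0(M)*. -/

import Mathlib

open Metric Set Filter NNReal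

noncomputable section

/-- The topological dual of a normed space, as `NormedSpace.Dual` was defined in the older Mathlib
(removed since); the topology on `E` is the one of its norm. -/
abbrev NormedSpace.Dual (𝕜 : Type*) [NontriviallyNormedField 𝕜] (E : Type*) [SeminormedAddCommGroup E]
    [NormedSpace 𝕜 E] : Type _ :=
  E →L[𝕜] 𝕜

namespace DeltaPaper

/-! ### Generic Banach space notions -/

variable {X : Type*} [NormedAddCommGroup X] [NormedSpace ℝ X]

/-- `x` is a Daugavet-point: every slice of the unit ball contains, for every `ε > 0`,
an element at distance at least `2 - ε` from `x`. -/
def IsDaugavetPoint (x : X) : Prop :=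
  ∀ (φ : NormedSpace.Dual ℝ X) (α : ℝ), ‖φ‖ = 1 → 0 < α → ∀ ε > 0,
    ∃ y : X, ‖y‖ ≤ 1 ∧ 1 - α < φ y ∧ 2 - ε ≤ ‖x - y‖

/-- `x` is a Δ-point: every slice of the unit ball containing `x` contains, for every
`ε > 0`, an element at distance at least `2 - ε` from `x`. -/
def IsDeltaPoint (x : X) : Prop :=
  ∀ (φ : NormedSpace.Dual ℝ X) (α : ℝ), ‖φ‖ = 1 → 0 < α → 1 - α < φ x → ∀ ε > 0,
    ∃ y : X, ‖y‖ ≤ 1 ∧ 1 - α < φ y ∧ 2 - ε ≤ ‖x - y‖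

/-- `x*` is a w*-Daugavet-point of the dual of `X`. -/
def IsWeakStarDaugavetPoint (f : NormedSpace.Dual ℝ X) : Prop :=
  ∀ (x : X) (α : ℝ), ‖x‖ = 1 → 0 < α → ∀ ε > 0,
    ∃ g : NormedSpace.Dual ℝ X, ‖g‖ ≤ 1 ∧ 1 - α < g x ∧ 2 - ε ≤ ‖f - g‖

/-- `x*` is a w*-Δ-point of the dual of `X`. -/
def IsWeakStarDeltaPoint (f : NormedSpace.Dual ℝ X) : Prop :=
  ∀ (x : X) (α : ℝ), ‖x‖ = 1 → 0 < α → 1 - α < f x → ∀ ε > 0,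
    ∃ g : NormedSpace.Dual ℝ X, ‖g‖ ≤ 1 ∧ 1 - α < g x ∧ 2 - ε ≤ ‖f - g‖

/-- `x` is a denting point of the unit ball: it lies in slices of the unit ball of
arbitrarily small diameter. -/
def IsDentingPoint (x : X) : Prop :=
  ‖x‖ ≤ 1 ∧ ∀ ε > 0, ∃ (φ : NormedSpace.Dual ℝ X) (α : ℝ), ‖φ‖ = 1 ∧ 0 < α ∧
    1 - α < φ x ∧ Metric.diam {y : X | ‖y‖ ≤ 1 ∧ 1 - α < φ y} < ε

/-- The Kuratowski measure of non-compactness of a set: the infimum of all `ε > 0`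
such that the set can be covered by finitely many sets of diameter less than `ε`. -/
def kuratowski {Y : Type*} [PseudoMetricSpace Y] (A : Set Y) : ℝ :=
  sInf {ε : ℝ | 0 < ε ∧ ∃ 𝒞 : Finset (Set Y), (A ⊆ ⋃ B ∈ 𝒞, B) ∧ ∀ B ∈ 𝒞, Metric.diam B < ε}

/-! ### The space of Lipschitz functions vanishing at a base point -/

variable {M : Type*} [PseudoMetricSpace M]

/-- The least Lipschitz constant of a function. -/
def lipConst (f : M → ℝ) : ℝ≥0 := sInf {K | LipschitzWith K f}

theorem lipschitzWith_lipConst {f : M → ℝ} (hf : ∃ K, LipschitzWith K f) :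
    LipschitzWith (lipConst f) f := by
  obtain ⟨K₀, hK₀⟩ := hf
  rw [lipschitzWith_iff_dist_le_mul]
  intro x y
  rcases le_or_gt (dist x y) 0 with h | h
  · have h0 : dist x y = 0 := le_antisymm h dist_nonneg
    have := hK₀.dist_le_mul x y
    rw [h0, mul_zero] at this ⊢
    exact this
  · rw [← div_le_iff₀ h]
    have hnn : 0 ≤ dist (f x) (f y) / dist x y := by positivity
    rw [← Real.coe_toNNReal _ hnn, NNReal.coe_le_coe]
    refine le_csInf ⟨K₀, hK₀⟩ ?_
    intro K hK
    rw [← NNReal.coe_le_coe, Real.coe_toNNReal _ hnn, div_le_iff₀ h]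
    exact hK.dist_le_mul x y

theorem lipConst_le {f : M → ℝ} {K : ℝ≥0} (hK : LipschitzWith K f) : lipConst f ≤ K :=
  csInf_le (OrderBot.bddBelow _) hK

theorem lipschitzWith_smul {f : M → ℝ} {K : ℝ≥0} (hK : LipschitzWith K f) (c : ℝ) :
    LipschitzWith (‖c‖₊ * K) (c • f) := by
  rw [lipschitzWith_iff_dist_le_mul] at *
  intro x y
  have : dist ((c • f) x) ((c • f) y) = ‖c‖ * dist (f x) (f y) := by
    simp only [Pi.smul_apply, smul_eq_mul, Real.dist_eq, ← mul_sub, abs_mul, Real.norm_eq_abs]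
  rw [this, NNReal.coe_mul, coe_nnnorm, mul_assoc]
  exact mul_le_mul_of_nonneg_left (hK x y) (norm_nonneg c)

variable (M) in
/-- The submodule of `M → ℝ` consisting of Lipschitz functions vanishing at the
base point `z`. -/
def Lip0 (z : M) : Submodule ℝ (M → ℝ) where
  carrier := {f | (∃ K, LipschitzWith K f) ∧ f z = 0}
  add_mem' := by
    rintro f g ⟨⟨K, hK⟩, hf0⟩ ⟨⟨L, hL⟩, hg0⟩
    exact ⟨⟨K + L, hK.add hL⟩, by simp [hf0, hg0]⟩
  zero_mem' := ⟨⟨0, LipschitzWith.const' 0⟩, rfl⟩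
  smul_mem' := by
    rintro c f ⟨⟨K, hK⟩, hf0⟩
    exact ⟨⟨‖c‖₊ * K, lipschitzWith_smul hK c⟩, by simp [hf0]⟩

variable {z : M}

instance : NormedAddCommGroup ↥(Lip0 M z) :=
  AddGroupNorm.toNormedAddCommGroup
    { toFun := fun f => ((lipConst (f : M → ℝ) : ℝ≥0) : ℝ)
      map_zero' := by
        have h0 : lipConst (0 : M → ℝ) = 0 :=
          le_antisymm (lipConst_le (by simpa using LipschitzWith.const' (0 : ℝ))) bot_le
        show ((lipConst ((0 : ↥(Lip0 M z)) : M → ℝ) : ℝ≥0) : ℝ) = 0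
        rw [show ((0 : ↥(Lip0 M z)) : M → ℝ) = 0 from rfl, h0, NNReal.coe_zero]
      add_le' := by
        intro f g
        have hf := lipschitzWith_lipConst f.2.1
        have hg := lipschitzWith_lipConst g.2.1
        have : lipConst ((f + g : ↥(Lip0 M z)) : M → ℝ) ≤
            lipConst (f : M → ℝ) + lipConst (g : M → ℝ) := by
          refine lipConst_le ?_
          have := hf.add hg
          exact this
        exact_mod_cast this
      neg' := by
        intro f
        show ((lipConst ((-f : ↥(Lip0 M z)) : M → ℝ) : ℝ≥0) : ℝ) = _
        rw [show ((-f : ↥(Lip0 M z)) : M → ℝ) = -(f : M → ℝ) from rfl]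
        unfold lipConst
        congr 2
        ext K
        exact ⟨fun hK => by simpa using hK.neg, fun hK => hK.neg⟩
      eq_zero_of_map_eq_zero' := by
        intro f hf
        replace hf : ((lipConst (f : M → ℝ) : ℝ≥0) : ℝ) = 0 := hf
        have h0 : lipConst (f : M → ℝ) = 0 := by exact_mod_cast hf
        have hl : LipschitzWith 0 (f : M → ℝ) := h0 ▸ lipschitzWith_lipConst f.2.1
        ext x
        have := hl.dist_le_mul x z
        simp only [NNReal.coe_zero, zero_mul] at this
        have hxz : (f : M → ℝ) x = (f : M → ℝ) z :=
          dist_le_zero.mp this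
        simpa [f.2.2] using hxz }

theorem Lip0.norm_def (f : ↥(Lip0 M z)) : ‖f‖ = ((lipConst (f : M → ℝ) : ℝ≥0) : ℝ) := rfl

theorem Lip0.lipschitzWith (f : ↥(Lip0 M z)) : LipschitzWith (lipConst (f : M → ℝ)) (f : M → ℝ) :=
  lipschitzWith_lipConst f.2.1

instance : NormedSpace ℝ ↥(Lip0 M z) where
  norm_smul_le c f := by
    have : lipConst ((c • f : ↥(Lip0 M z)) : M → ℝ) ≤ ‖c‖₊ * lipConst (f : M → ℝ) :=
      lipConst_le (lipschitzWith_smul (Lip0.lipschitzWith f) c)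
    calc ‖c • f‖ = ((lipConst ((c • f : ↥(Lip0 M z)) : M → ℝ) : ℝ≥0) : ℝ) := rfl
      _ ≤ ((‖c‖₊ * lipConst (f : M → ℝ) : ℝ≥0) : ℝ) := by exact_mod_cast this
      _ = ‖c‖ * ‖f‖ := by push_cast [Lip0.norm_def]; rfl

variable (M z) in
/-- The evaluation functional `δ_x ∈ Lip₀(M)*`. -/
def evalδ (x : M) : NormedSpace.Dual ℝ ↥(Lip0 M z) :=
  LinearMap.mkContinuous
    { toFun := fun f => (f : M → ℝ) x
      map_add' := fun f g => rfl
      map_smul' := fun c f => rfl }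
    (dist x z)
    (by
      intro f
      have := (Lip0.lipschitzWith f).dist_le_mul x z
      simp only [f.2.2, Real.dist_eq, sub_zero] at this
      calc ‖(f : M → ℝ) x‖ = |(f : M → ℝ) x - 0| := by simp
        _ ≤ (lipConst (f : M → ℝ) : ℝ) * dist x z := by
            simpa [f.2.2, Real.dist_eq] using (Lip0.lipschitzWith f).dist_le_mul x z
        _ = dist x z * ‖f‖ := by rw [Lip0.norm_def, mul_comm])

variable (M z) in
/-- The Lipschitz-free space over `M`: the closed linear span of the evaluation
functionals inside `Lip₀(M)*`. -/
def FreeSpace : Submodule ℝ (NormedSpace.Dual ℝ ↥(Lip0 M z)) :=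
  (Submodule.span ℝ (Set.range (evalδ M z))).topologicalClosure

variable (M z) in
/-- The molecule `m_{x y} = (δ_x - δ_y)/d(x,y)` as an element of `Lip₀(M)*`. -/
def molecule (x y : M) : NormedSpace.Dual ℝ ↥(Lip0 M z) :=
  (dist x y)⁻¹ • (evalδ M z x - evalδ M z y)

theorem molecule_mem_freeSpace (x y : M) : molecule M z x y ∈ FreeSpace M z :=
  Submodule.le_topologicalClosure _
    (Submodule.smul_mem _ _ (Submodule.sub_mem _
      (Submodule.subset_span ⟨x, rfl⟩) (Submodule.subset_span ⟨y, rfl⟩)))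

variable (M z) in
/-- The molecule `m_{x y}` as an element of the free space `F(M)`. -/
def mol (x y : M) : ↥(FreeSpace M z) := ⟨molecule M z x y, molecule_mem_freeSpace x y⟩

variable (M) in
/-- A metric space is uniformly discrete if distances between distinct points are
bounded below by a positive constant. -/
def UniformlyDiscrete : Prop := ∃ θ > (0:ℝ), ∀ x y : M, x ≠ y → θ ≤ dist x y

/-- A norm-one Lipschitz function is local if its Lipschitz constant is approximated
on pairs of arbitrarily close points. -/
def IsLocal (f : ↥(Lip0 M z)) : Prop :=
  ∀ ε > 0, ∃ u v : M, u ≠ v ∧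
    ‖f‖ - ε < ((f : M → ℝ) u - (f : M → ℝ) v) / dist u v ∧ dist u v < ε

/-- `f ∈ S_{Lip₀(M)}` is a w*-Daugavet-point: for every w*-slice `S(μ, α)` of
`B_{Lip₀(M)}` (`μ` a norm-one element of `F(M)`) and every `ε > 0` there is `g` in the
slice with `‖f - g‖ ≥ 2 - ε`. -/
def IsLipWeakStarDaugavetPoint (f : ↥(Lip0 M z)) : Prop :=
  ∀ μ : NormedSpace.Dual ℝ ↥(Lip0 M z), μ ∈ FreeSpace M z → ‖μ‖ = 1 → ∀ α > (0:ℝ), ∀ ε > (0:ℝ),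
    ∃ g : ↥(Lip0 M z), ‖g‖ ≤ 1 ∧ 1 - α < μ g ∧ 2 - ε ≤ ‖f - g‖

/-- `f ∈ S_{Lip₀(M)}` is a w*-Δ-point: the same as above, but only for w*-slices
containing `f`. -/
def IsLipWeakStarDeltaPoint (f : ↥(Lip0 M z)) : Prop :=
  ∀ μ : NormedSpace.Dual ℝ ↥(Lip0 M z), μ ∈ FreeSpace M z → ‖μ‖ = 1 → ∀ α > (0:ℝ),
    1 - α < μ f → ∀ ε > (0:ℝ),
    ∃ g : ↥(Lip0 M z), ‖g‖ ≤ 1 ∧ 1 - α < μ g ∧ 2 - ε ≤ ‖f - g‖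

end DeltaPaper

open DeltaPaper NormedSpace Filter

/-!
Fix `f` in the unit ball of `Lip₀(M)` with `F f` close to `1`. For each `i`, replace `f` inside
`A i` by the McShane extension of `f|_{M \ A i}` with constant `(1 - ε)⁻¹`, cut down by a cone
at `v i`: this is `(1 - ε)⁻¹`-Lipschitz, equals `f` off `A i`, and has slope at least `1` from
`u i` to `v i`; the hypothesis on `A i` is exactly what keeps the cone above `f` on `M \ A i`.
The differences `h i` are supported on the disjoint sets `A i` and uniformly bounded, so every
signed finite sum of them has norm at most twice that bound; hence `∑ |F (h i)| < ∞` and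
`F (h i) → 0`. Testing `F + m_{u_i v_i}` on `(1 - ε) • (f + h i)` gives
`‖F + m_{u_i v_i}‖ ≥ (1 - ε) (F f + F (h i) + 1)`, whose limit is close to `2 - 2ε`.
-/

open Topology

theorem ContinuousLinearMap.exists_norm_le_one_lt_apply {E : Type*} [NormedAddCommGroup E]
    [NormedSpace ℝ E] (φ : E →L[ℝ] ℝ) {r : ℝ} (hr : r < ‖φ‖) : ∃ x, ‖x‖ ≤ 1 ∧ r < φ x := by
  obtain ⟨x, hx, hrx⟩ := φ.exists_lt_apply_of_lt_opNorm hr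
  rw [Real.norm_eq_abs, lt_abs] at hrx
  rcases hrx with hrx | hrx
  · exact ⟨x, hx.le, hrx⟩
  · exact ⟨-x, by simpa using hx.le, by simpa using hrx⟩

theorem ContinuousLinearMap.mul_apply_le_opNorm {E : Type*} [NormedAddCommGroup E]
    [NormedSpace ℝ E] (φ : E →L[ℝ] ℝ) {c : ℝ} (hc : 0 < c) {x : E} (hx : ‖x‖ ≤ c⁻¹) :
    c * φ x ≤ ‖φ‖ := by
  have hcx : ‖c • x‖ ≤ 1 := by
    rw [norm_smul, Real.norm_of_nonneg hc.le, ← le_div_iff₀' hc, one_div]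
    exact hx
  simpa using (le_abs_self _).trans (φ.unit_le_opNorm _ hcx)

theorem Pairwise.eventually_cofinite_notMem {ι α : Type*} {A : ι → Set α}
    (hA : Pairwise fun i j => Disjoint (A i) (A j)) (x : α) : ∀ᶠ i in cofinite, x ∉ A i :=
  Set.Finite.eventually_cofinite_notMem <| Set.Subsingleton.finite fun _ hi _ hj =>
    by_contra fun hne => Set.disjoint_left.1 (hA hne) hi hj

section UpperExtension

variable {M : Type*} [PseudoMetricSpace M] {f : M → ℝ} {K : ℝ≥0} {s : Set M} {x : M}

/-- McShane's extension of `f|s`: the largest `K`-Lipschitz extension. -/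
def upperExtension (f : M → ℝ) (K : ℝ≥0) (s : Set M) (x : M) : ℝ :=
  ⨅ p : s, f p + K * dist x p

theorem bddBelow_range_upperExtension (hf : LipschitzOnWith K f s) (p₀ : s) (x : M) :
    BddBelow (range fun p : s => f p + K * dist x p) := by
  refine ⟨f p₀ - K * dist x p₀, ?_⟩
  rintro _ ⟨p, rfl⟩
  have hfp : f p₀ ≤ f p + K * dist (p₀ : M) p := hf.le_add_mul p₀.2 p.2
  have := mul_le_mul_of_nonneg_left (dist_triangle_left (p₀ : M) p x) K.coe_nonneg
  rw [mul_add] at this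
  dsimp only
  linarith

theorem upperExtension_le (hf : LipschitzOnWith K f s) {p : M} (hp : p ∈ s) :
    upperExtension f K s x ≤ f p + K * dist x p :=
  ciInf_le (bddBelow_range_upperExtension hf ⟨p, hp⟩ x) ⟨p, hp⟩

theorem le_upperExtension (hs : s.Nonempty) {a : ℝ} (h : ∀ p ∈ s, a ≤ f p + K * dist x p) :
    a ≤ upperExtension f K s x :=
  haveI := hs.to_subtype
  le_ciInf fun p => h p p.2

theorem upperExtension_eq_of_mem (hf : LipschitzOnWith K f s) (hx : x ∈ s) :
    upperExtension f K s x = f x :=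
  le_antisymm (by simpa using upperExtension_le (x := x) hf hx)
    (le_upperExtension ⟨x, hx⟩ fun _ hp => hf.le_add_mul hx hp)

theorem lipschitzWith_upperExtension (hf : LipschitzOnWith K f s) (hs : s.Nonempty) :
    LipschitzWith K (upperExtension f K s) := by
  refine LipschitzWith.of_le_add_mul K fun x y => ?_
  rw [← sub_le_iff_le_add]
  refine le_upperExtension hs fun p hp => ?_
  have hx := upperExtension_le (x := x) hf hp
  have := mul_le_mul_of_nonneg_left (dist_triangle x y p) K.coe_nonneg
  rw [mul_add] at this
  linarith

/-- The witness is the upper extension cut down by the cone `U u - dist u v + K * dist · v`;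
`hfar` is what keeps this cone above `f` on `s`. -/
theorem exists_lipschitzWith_eqOn_le_sub (hf : LipschitzOnWith 1 f s) (hs : s.Nonempty)
    (hK : 1 ≤ K) {u v : M}
    (hfar : ∀ p ∈ s, ∀ q ∈ s, dist u v + dist p q ≤ K * (dist u p + dist v q)) :
    ∃ g : M → ℝ, LipschitzWith K g ∧ EqOn g f s ∧ dist u v ≤ g u - g v := by
  have hfK : LipschitzOnWith K f s := hf.weaken hK
  set U := upperExtension f K s
  have hU : LipschitzWith K U := lipschitzWith_upperExtension hfK hs
  have hcone : LipschitzWith K fun x => U u - dist u v + K * dist x v :=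
    LipschitzWith.of_le_add_mul K fun x y => by
      have := mul_le_mul_of_nonneg_left (dist_triangle x y v) K.coe_nonneg
      rw [mul_add] at this
      linarith
  refine ⟨fun x => min (U x) (U u - dist u v + K * dist x v), by simpa using hU.min hcone,
    fun q hq => ?_, ?_⟩
  · have hUq : U q = f q := upperExtension_eq_of_mem hfK hq
    suffices f q ≤ U u - dist u v + K * dist q v by simpa [hUq] using this
    have : f q + dist u v - K * dist q v ≤ U u := le_upperExtension hs fun p hp => by
      have hfq : f q ≤ f p + dist q p := by simpa using hf.le_add_mul hq hp
      have := hfar p hp q hq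
      rw [dist_comm q p] at hfq
      rw [dist_comm v q, mul_add] at this
      linarith
    linarith
  · have hd : dist u v ≤ K * dist u v := le_mul_of_one_le_left dist_nonneg hK
    have hgu : min (U u) (U u - dist u v + K * dist u v) = U u := min_eq_left (by linarith)
    have hgv : min (U v) (U u - dist u v + K * dist v v) ≤ U u - dist u v := by simp
    show dist u v ≤ min (U u) _ - min (U v) _
    linarith

end UpperExtension

namespace DeltaPaper

namespace Lip0

variable {M : Type*} [PseudoMetricSpace M] {z : M}

theorem dist_le (f : ↥(Lip0 M z)) (x y : M) :
    dist ((f : M → ℝ) x) ((f : M → ℝ) y) ≤ ‖f‖ * dist x y :=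
  (Lip0.lipschitzWith f).dist_le_mul x y

theorem norm_le_of_lipschitzWith {f : ↥(Lip0 M z)} {K : ℝ≥0}
    (hf : LipschitzWith K (f : M → ℝ)) : ‖f‖ ≤ K :=
  NNReal.coe_le_coe.2 (lipConst_le hf)

theorem norm_le_of_dist_le {f : ↥(Lip0 M z)} {K : ℝ} (hK : 0 ≤ K)
    (hf : ∀ x y, dist ((f : M → ℝ) x) ((f : M → ℝ) y) ≤ K * dist x y) : ‖f‖ ≤ K := by
  simpa [Real.coe_toNNReal _ hK] using norm_le_of_lipschitzWith (LipschitzWith.of_dist_le' hf)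

end Lip0

section PseudoMetricSpace

variable {M : Type*} [PseudoMetricSpace M] {z : M}

theorem molecule_apply (x y : M) (f : ↥(Lip0 M z)) :
    molecule M z x y f = (dist x y)⁻¹ * ((f : M → ℝ) x - (f : M → ℝ) y) :=
  rfl

theorem norm_molecule_le_one (x y : M) : ‖molecule M z x y‖ ≤ 1 := by
  refine ContinuousLinearMap.opNorm_le_bound _ zero_le_one fun f => ?_
  rw [molecule_apply, norm_mul, norm_inv, Real.norm_of_nonneg dist_nonneg, one_mul, ← dist_eq_norm]
  calc (dist x y)⁻¹ * dist ((f : M → ℝ) x) ((f : M → ℝ) y)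
      ≤ (dist x y)⁻¹ * (‖f‖ * dist x y) := by gcongr; exact Lip0.dist_le f x y
    _ = ‖f‖ * ((dist x y)⁻¹ * dist x y) := by ring
    _ ≤ ‖f‖ := mul_le_of_le_one_right (norm_nonneg f) (inv_mul_le_one_of_le₀ le_rfl dist_nonneg)

end PseudoMetricSpace

section DisjointSupports

variable {M : Type*} [PseudoMetricSpace M] {z : M} {ι : Type*} {A : ι → Set M}
  {h : ι → ↥(Lip0 M z)} {K : ℝ≥0}

theorem sum_abs_sub_le_of_disjoint_supports (hA : Pairwise fun i j => Disjoint (A i) (A j))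
    (hsupp : ∀ i, ∀ x ∉ A i, (h i : M → ℝ) x = 0) (hK : ∀ i, ‖h i‖ ≤ K) (S : Finset ι)
    (x y : M) :
    ∑ i ∈ S, |(h i : M → ℝ) x - (h i : M → ℝ) y| ≤ 2 * K * dist x y := by
  -- a point lies in at most one `A i`, so at most two terms of the sum are nonzero
  have hcount (w : M) : ∑ i ∈ S, (A i).indicator 1 w ≤ (1 : ℝ) := by
    rw [← Finset.indicator_biUnion_apply S A (hA.set_pairwise _)]
    exact Set.indicator_apply_le' (fun _ => le_rfl) fun _ => zero_le_one
  have hterm (i : ι) : |(h i : M → ℝ) x - (h i : M → ℝ) y| ≤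
      K * dist x y * ((A i).indicator 1 x + (A i).indicator 1 y) := by
    by_cases hxy : x ∈ A i ∨ y ∈ A i
    · have hone : (1 : ℝ) ≤ (A i).indicator 1 x + (A i).indicator 1 y := by
        rcases hxy with hx | hy
        · simp [Set.indicator_of_mem hx, Set.indicator_nonneg]
        · simp [Set.indicator_of_mem hy, Set.indicator_nonneg]
      calc |(h i : M → ℝ) x - (h i : M → ℝ) y| ≤ ‖h i‖ * dist x y := Lip0.dist_le (h i) x y
        _ ≤ K * dist x y := by gcongr; exact hK i
        _ ≤ K * dist x y * ((A i).indicator 1 x + (A i).indicator 1 y) :=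
          le_mul_of_one_le_right (by positivity) hone
    · push Not at hxy
      simp [hsupp i x hxy.1, hsupp i y hxy.2, Set.indicator_of_notMem hxy.1,
        Set.indicator_of_notMem hxy.2]
  calc ∑ i ∈ S, |(h i : M → ℝ) x - (h i : M → ℝ) y|
      ≤ ∑ i ∈ S, K * dist x y * ((A i).indicator 1 x + (A i).indicator 1 y) :=
        Finset.sum_le_sum fun i _ => hterm i
    _ = K * dist x y * (∑ i ∈ S, (A i).indicator 1 x + ∑ i ∈ S, (A i).indicator 1 y) := by
        rw [← Finset.mul_sum, Finset.sum_add_distrib]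
    _ ≤ K * dist x y * 2 := by
        gcongr
        linarith [hcount x, hcount y]
    _ = 2 * K * dist x y := by ring

theorem norm_sum_smul_le_of_disjoint_supports (hA : Pairwise fun i j => Disjoint (A i) (A j))
    (hsupp : ∀ i, ∀ x ∉ A i, (h i : M → ℝ) x = 0) (hK : ∀ i, ‖h i‖ ≤ K) (S : Finset ι)
    {σ : ι → ℝ} (hσ : ∀ i, |σ i| ≤ 1) :
    ‖∑ i ∈ S, σ i • h i‖ ≤ 2 * K := by
  refine Lip0.norm_le_of_dist_le (by positivity) fun x y => ?_
  have hcoe (w : M) : ((∑ i ∈ S, σ i • h i : ↥(Lip0 M z)) : M → ℝ) w =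
      ∑ i ∈ S, σ i * (h i : M → ℝ) w := by
    simp
  rw [hcoe, hcoe, Real.dist_eq, ← Finset.sum_sub_distrib]
  calc |∑ i ∈ S, (σ i * (h i : M → ℝ) x - σ i * (h i : M → ℝ) y)|
      ≤ ∑ i ∈ S, |σ i * (h i : M → ℝ) x - σ i * (h i : M → ℝ) y| :=
        Finset.abs_sum_le_sum_abs _ _
    _ ≤ ∑ i ∈ S, |(h i : M → ℝ) x - (h i : M → ℝ) y| := Finset.sum_le_sum fun i _ => by
        rw [← mul_sub, abs_mul]
        exact mul_le_of_le_one_left (abs_nonneg _) (hσ i)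
    _ ≤ 2 * K * dist x y := sum_abs_sub_le_of_disjoint_supports hA hsupp hK S x y

theorem sum_abs_apply_le_of_disjoint_supports (F : Dual ℝ ↥(Lip0 M z))
    (hA : Pairwise fun i j => Disjoint (A i) (A j))
    (hsupp : ∀ i, ∀ x ∉ A i, (h i : M → ℝ) x = 0) (hK : ∀ i, ‖h i‖ ≤ K) (S : Finset ι) :
    ∑ i ∈ S, |F (h i)| ≤ ‖F‖ * (2 * K) := by
  have hsign (a : ℝ) : |(SignType.sign a : ℝ)| ≤ 1 := by
    rcases lt_trichotomy a 0 with ha | ha | ha <;> simp [ha]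
  calc ∑ i ∈ S, |F (h i)| = F (∑ i ∈ S, (SignType.sign (F (h i)) : ℝ) • h i) := by
        simp [map_sum, sign_mul_self]
    _ ≤ ‖F‖ * ‖∑ i ∈ S, (SignType.sign (F (h i)) : ℝ) • h i‖ :=
        (le_abs_self _).trans (F.le_opNorm _)
    _ ≤ ‖F‖ * (2 * K) := by
        gcongr
        exact norm_sum_smul_le_of_disjoint_supports hA hsupp hK S fun i => hsign _

theorem tendsto_cofinite_apply_of_disjoint_supports (F : Dual ℝ ↥(Lip0 M z))
    (hA : Pairwise fun i j => Disjoint (A i) (A j))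
    (hsupp : ∀ i, ∀ x ∉ A i, (h i : M → ℝ) x = 0) {C : ℝ} (hC : ∀ i, ‖h i‖ ≤ C) :
    Tendsto (fun i => F (h i)) cofinite (𝓝 0) := by
  have hsum : Summable fun i => |F (h i)| :=
    summable_of_sum_le (fun i => abs_nonneg _) <| sum_abs_apply_le_of_disjoint_supports F hA hsupp
      (K := C.toNNReal) fun i => (hC i).trans (Real.le_coe_toNNReal C)
  exact (tendsto_zero_iff_abs_tendsto_zero _).2 hsum.tendsto_cofinite_zero

end DisjointSupports

section MetricSpace

variable {M : Type*} [MetricSpace M] {z : M}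

theorem exists_supported_one_le_molecule_apply_add {f : ↥(Lip0 M z)} (hf : ‖f‖ ≤ 1) {A : Set M}
    (hzA : z ∉ A) {K : ℝ≥0} (hK : 1 ≤ K) {u v : M} (huv : u ≠ v)
    (hfar : ∀ p ∉ A, ∀ q ∉ A, dist u v + dist p q ≤ K * (dist u p + dist v q)) :
    ∃ h : ↥(Lip0 M z), (∀ x ∉ A, (h : M → ℝ) x = 0) ∧ ‖f + h‖ ≤ K ∧
      1 ≤ molecule M z u v (f + h) := by
  have hf1 : LipschitzWith 1 (f : M → ℝ) :=
    (Lip0.lipschitzWith f).weaken (NNReal.coe_le_coe.1 hf)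
  obtain ⟨g, hg, hgf, hguv⟩ :=
    exists_lipschitzWith_eqOn_le_sub hf1.lipschitzOnWith ⟨z, hzA⟩ hK hfar
  have hmem : g - (f : M → ℝ) ∈ Lip0 M z :=
    ⟨⟨K + 1, hg.sub hf1⟩, by simp [hgf (show z ∈ Aᶜ from hzA)]⟩
  set h : ↥(Lip0 M z) := ⟨_, hmem⟩
  have hfh : ((f + h : ↥(Lip0 M z)) : M → ℝ) = g := by
    ext x
    simp [h]
  refine ⟨h, fun x hx => by simp [h, hgf (show x ∈ Aᶜ from hx)], ?_, ?_⟩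
  · exact Lip0.norm_le_of_lipschitzWith (by rwa [hfh])
  · rw [molecule_apply, hfh, ← div_eq_inv_mul, one_le_div (dist_pos.2 huv)]
    exact hguv

theorem isBoundedUnder_norm_add_molecule {ι : Type*} (l : Filter ι) (F : Dual ℝ ↥(Lip0 M z))
    (u v : ι → M) : IsBoundedUnder (· ≤ ·) l fun i => ‖F + molecule M z (u i) (v i)‖ :=
  isBoundedUnder_of ⟨‖F‖ + 1, fun i =>
    (norm_add_le _ _).trans (by gcongr; exact norm_molecule_le_one _ _)⟩

theorem exists_supported_perturbations {ι : Type*} {ε : ℝ} (hε : 0 ≤ ε) (hε1 : ε < 1)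
    {u v : ι → M} (huv : ∀ i, u i ≠ v i) {A : ι → Set M}
    (hineq : ∀ i, ∀ x ∉ A i, ∀ y ∉ A i,
      (1 - ε) * (dist (u i) (v i) + dist x y) ≤ dist (u i) x + dist (v i) y)
    {f : ↥(Lip0 M z)} (hf : ‖f‖ ≤ 1) :
    ∃ h : ι → ↥(Lip0 M z), (∀ i, ∀ x ∉ A i, (h i : M → ℝ) x = 0) ∧
      (∀ i, ‖f + h i‖ ≤ (1 - ε)⁻¹) ∧
      ∀ i, z ∉ A i → 1 ≤ molecule M z (u i) (v i) (f + h i) := by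
  set K : ℝ≥0 := (1 - ε)⁻¹.toNNReal
  have hK : (K : ℝ) = (1 - ε)⁻¹ := Real.coe_toNNReal _ (inv_nonneg.2 (by linarith))
  have hK1 : 1 ≤ K := by
    rw [← NNReal.coe_le_coe, hK, NNReal.coe_one]
    exact one_le_inv₀ (by linarith) |>.2 (by linarith)
  have hfar (i : ι) : ∀ p ∉ A i, ∀ q ∉ A i,
      dist (u i) (v i) + dist p q ≤ K * (dist (u i) p + dist (v i) q) := fun p hp q hq => by
    rw [hK, ← div_eq_inv_mul, le_div_iff₀' (by linarith)]
    exact hineq i p hp q hq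
  have hpert (i : ι) : ∃ h : ↥(Lip0 M z), (∀ x ∉ A i, (h : M → ℝ) x = 0) ∧
      ‖f + h‖ ≤ (1 - ε)⁻¹ ∧ (z ∉ A i → 1 ≤ molecule M z (u i) (v i) (f + h)) := by
    by_cases hz : z ∈ A i
    · exact ⟨0, fun _ _ => rfl, by simpa [← hK] using hf.trans (by exact_mod_cast hK1),
        fun hz' => absurd hz hz'⟩
    · obtain ⟨h, hsupp, hnorm, hmol⟩ :=
        exists_supported_one_le_molecule_apply_add hf hz hK1 (huv i) (hfar i)
      exact ⟨h, hsupp, hK ▸ hnorm, fun _ => hmol⟩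
  choose h hsupp hnorm hmol using hpert
  exact ⟨h, hsupp, hnorm, hmol⟩

end MetricSpace

end DeltaPaper

theorem statement11_general {M : Type*} [MetricSpace M] (z : M) (ε : ℝ) (hε : 0 < ε)
    (u v : ℕ → M) (huv : ∀ i, u i ≠ v i)
    (A : ℕ → Set M) (hdisj : Pairwise fun i j => Disjoint (A i) (A j))
    (hineq : ∀ i, ∀ x ∉ A i, ∀ y ∉ A i,
      (1 - ε) * (dist (u i) (v i) + dist x y) ≤ dist (u i) x + dist (v i) y)
    (F : Dual ℝ ↥(Lip0 M z)) (hF : ‖F‖ = 1) :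
    2 - 2 * ε ≤ limsup (fun i => ‖F + molecule M z (u i) (v i)‖) atTop := by
  have hbdd := isBoundedUnder_norm_add_molecule atTop F u v
  rcases le_or_gt 1 ε with hε1 | hε1
  · exact (by linarith : 2 - 2 * ε ≤ 0).trans
      (le_limsup_of_frequently_le (.of_forall fun _ => norm_nonneg _) hbdd)
  refine le_of_forall_pos_lt_add fun η hη => ?_
  obtain ⟨f, hf, hFf⟩ := F.exists_norm_le_one_lt_apply (r := 1 - η / 2) (by linarith)
  obtain ⟨h, hsupp, hnorm, hmol⟩ := exists_supported_perturbations hε.le hε1 huv hineq hf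
  have hFh : Tendsto (fun i => F (h i)) atTop (𝓝 0) := by
    rw [← Nat.cofinite_eq_atTop]
    exact tendsto_cofinite_apply_of_disjoint_supports F hdisj hsupp (C := (1 - ε)⁻¹ + 1)
      fun i => (norm_le_add_norm_add' f (h i)).trans (add_le_add (hnorm i) hf)
  have hlow : ∀ᶠ i in atTop, (1 - ε) * (2 - η) ≤ ‖F + molecule M z (u i) (v i)‖ := by
    filter_upwards [hFh.eventually_const_lt (neg_lt_zero.2 (half_pos hη)),
      Nat.cofinite_eq_atTop ▸ hdisj.eventually_cofinite_notMem z] with i hFi hzi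
    calc (1 - ε) * (2 - η)
        ≤ (1 - ε) * (F + molecule M z (u i) (v i)) (f + h i) := by
          gcongr
          show _ ≤ F (f + h i) + molecule M z (u i) (v i) (f + h i)
          linarith [map_add F f (h i), hmol i hzi]
      _ ≤ ‖F + molecule M z (u i) (v i)‖ :=
          ContinuousLinearMap.mul_apply_le_opNorm _ (by linarith) (hnorm i)
  calc 2 - 2 * ε < (1 - ε) * (2 - η) + η := by nlinarith
    _ ≤ limsup (fun i => ‖F + molecule M z (u i) (v i)‖) atTop + η := by
        gcongr
        exact le_limsup_of_frequently_le hlow.frequently hbdd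

/-- Proposition 4.3. Let `ε > 0` and let `(m_{u_iv_i})` be a sequence of
molecules for which there is a sequence `(A_i)` of pairwise disjoint subsets of `M` with
`u_i ∈ A_i` and `d(u_i,x) + d(v_i,y) ≥ (1-ε)(d(u_i,v_i) + d(x,y))` for all `i` and all
`x, y ∉ A_i`. Then `limsup_i ‖F + m_{u_iv_i}‖ ≥ 2 - 2ε` for every `F ∈ S_{Lip₀(M)*}`. -/
theorem statement11 {M : Type*} [MetricSpace M] (z : M) (ε : ℝ) (hε : 0 < ε)
    (u v : ℕ → M) (huv : ∀ i, u i ≠ v i)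
    (A : ℕ → Set M) (hdisj : Pairwise fun i j => Disjoint (A i) (A j))
    (hu : ∀ i, u i ∈ A i)
    (hineq : ∀ i, ∀ x ∉ A i, ∀ y ∉ A i,
      (1 - ε) * (dist (u i) (v i) + dist x y) ≤ dist (u i) x + dist (v i) y)
    (F : Dual ℝ ↥(Lip0 M z)) (hF : ‖F‖ = 1) :
    2 - 2 * ε ≤ limsup (fun i => ‖F + molecule M z (u i) (v i)‖) atTop :=
  statement11_general z ε hε u v huv A hdisj hineq F hF
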